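/- arXiv:0902.3762 — 4 statements merged into one kernel-verified Lean document; each statement's English description precedes it below -/
import Mathlib

section
/- The cellular automaton T_{f[l,r]} on Z_{p^k}^Z with linear local rule f(x_l,...,x_r) = Σ_{i=l}^{r} λ_i x_i (mod p^k), where p is prime, is invertible if and only if there exists a unique index j with l ≤ j ≤ r such that gcd(p, λ_j) = 1 (i.e., p | λ_i for all i ≠ j and gcd(p, λ_j) = 1). -/
/-!
The rule `x ↦ (∑ i, λ i * x (n + i))ₙ` is the action of the Laurent polynomial
`Λ = ∑ λ i T ^ i` on `ℤ → ZMod (p ^ k)` through the shifts. Every element of `ZMod (p ^ k)` is a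
unit or nilpotent. If exactly one `λ j` is a unit, `Λ` is a unit plus a nilpotent, hence a unit,
and its inverse acts as the inverse map. Conversely, a surjective rule must have a non-nilpotent,
i.e. unit, coefficient. If two coefficients were units, their reductions mod `p` would give a
Laurent polynomial over `ZMod p` with two nonzero terms; it has a nonzero root `α` in an
algebraic closure, and a coordinate of the sequence `α ^ n` is a nonzero kernel element over
`ZMod p`. Multiplication by `p ^ (k - 1)` embeds `ZMod p` into `ZMod (p ^ k)` compatibly with
reduction mod `p`, so it lifts that sequence to a nonzero kernel element over `ZMod (p ^ k)`.
-/

open Function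

section LinearCA

variable {R : Type*} [CommRing R]

def linearCA (s : Finset ℤ) (c : ℤ → R) (x : ℤ → R) (n : ℤ) : R :=
  ∑ i ∈ s, c i * x (n + i)

open LaurentPolynomial

noncomputable def shiftHom : Multiplicative ℤ →* Module.End R (ℤ → R) where
  toFun i := LinearMap.funLeft R R (· + i.toAdd)
  map_one' := LinearMap.ext fun x => funext fun n => by simp
  map_mul' i j := LinearMap.ext fun x => funext fun n => by simp [add_assoc]

noncomputable def laurentAct : R[T;T⁻¹] →ₐ[R] Module.End R (ℤ → R) :=
  AddMonoidAlgebra.lift R (Module.End R (ℤ → R)) ℤ shiftHom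

theorem laurentAct_sum_C_mul_T (s : Finset ℤ) (c : ℤ → R) :
    ⇑(laurentAct (∑ i ∈ s, C (c i) * T i)) = linearCA s c := by
  funext x n
  simp [← single_eq_C_mul_T, laurentAct, shiftHom, linearCA]

theorem bijective_linearCA_of_isUnit {s : Finset ℤ} {c : ℤ → R}
    (h : IsUnit (∑ i ∈ s, C (c i) * T i : R[T;T⁻¹])) : Bijective (linearCA s c) := by
  rw [← laurentAct_sum_C_mul_T, ← Module.End.isUnit_iff]
  exact h.map laurentAct

theorem isUnit_sum_C_mul_T {s : Finset ℤ} {c : ℤ → R} {j : ℤ} (hjs : j ∈ s) (hj : IsUnit (c j))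
    (hnil : ∀ i ∈ s, i ≠ j → IsNilpotent (c i)) :
    IsUnit (∑ i ∈ s, C (c i) * T i : R[T;T⁻¹]) := by
  rw [← Finset.add_sum_erase s _ hjs]
  refine IsNilpotent.isUnit_add_left_of_commute ?_ ((hj.map C).mul (isUnit_T j)) (Commute.all _ _)
  refine isNilpotent_sum fun i hi => (Commute.all _ _).isNilpotent_mul_right ?_
  exact (hnil i (Finset.mem_of_mem_erase hi) (Finset.ne_of_mem_erase hi)).map C

theorem exists_not_isNilpotent_of_surjective [Nontrivial R] {s : Finset ℤ} {c : ℤ → R}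
    (h : Surjective (linearCA s c)) : ∃ i ∈ s, ¬ IsNilpotent (c i) := by
  by_contra! hnil
  obtain ⟨x, hx⟩ := h 1
  have hsum : IsNilpotent (linearCA s c x 0) :=
    isNilpotent_sum fun i hi => (Commute.all _ _).isNilpotent_mul_right (hnil i hi)
  exact not_isNilpotent_one (congrFun hx 0 ▸ hsum)

theorem injective_linearCA_comp {S : Type*} [CommRing S] {s : Finset ℤ} {c : ℤ → R}
    (ρ : R →+* S) {ψ : S →+ R} (hψ : Injective ψ) (hmul : ∀ a b, a * ψ b = ψ (ρ a * b))
    (h : Injective (linearCA s c)) : Injective (linearCA s (ρ ∘ c)) := by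
  have hcomm : ∀ y, linearCA s c (ψ ∘ y) = ψ ∘ linearCA s (ρ ∘ c) y := fun y =>
    funext fun n => by simp [linearCA, map_sum, hmul]
  intro y y' hy
  exact hψ.comp_left (h (by rw [hcomm, hcomm, hy]))

end LinearCA

open Polynomial in
theorem exists_isRoot_ne_zero {K : Type*} [Field K] [IsAlgClosed K] {g : K[X]}
    (hg0 : g.coeff 0 ≠ 0) {n : ℕ} (hn : n ≠ 0) (hgn : g.coeff n ≠ 0) :
    ∃ α ≠ 0, g.IsRoot α := by
  have hdeg : g.degree ≠ 0 := by
    refine (natDegree_pos_iff_degree_pos.mp ?_).ne'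
    have := le_natDegree_of_ne_zero hgn
    omega
  obtain ⟨α, hα⟩ := IsAlgClosed.exists_root g hdeg
  refine ⟨α, ?_, hα⟩
  rintro rfl
  exact hg0 (by rwa [coeff_zero_eq_eval_zero])

open Polynomial in
theorem exists_zpow_root {K : Type*} [Field K] [IsAlgClosed K] {s : Finset ℤ} {c : ℤ → K}
    {i j : ℤ} (hi : i ∈ s) (hj : j ∈ s) (hij : i ≠ j) (hci : c i ≠ 0) (hcj : c j ≠ 0) :
    ∃ α : Kˣ, ∑ m ∈ s, c m * ↑(α ^ m) = 0 := by
  classical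
  set t := s.filter (c · ≠ 0)
  have ht : i ∈ t := Finset.mem_filter.mpr ⟨hi, hci⟩
  set a := t.min' ⟨i, ht⟩
  obtain ⟨has, hca⟩ := Finset.mem_filter.mp (t.min'_mem ⟨i, ht⟩)
  have ha_le : ∀ m ∈ s, c m ≠ 0 → a ≤ m := fun m hm hcm =>
    t.min'_le m (Finset.mem_filter.mpr ⟨hm, hcm⟩)
  obtain ⟨b, hbs, hcb, hab⟩ : ∃ b ∈ s, c b ≠ 0 ∧ a < b := by
    rcases (ha_le i hi hci).lt_or_eq with h | h
    · exact ⟨i, hi, hci, h⟩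
    · exact ⟨j, hj, hcj, lt_of_le_of_ne (ha_le j hj hcj) (h.trans_ne hij)⟩
  -- `g = X ^ (-a) * ∑ m, c m * X ^ m`
  set g : K[X] := ∑ m ∈ s, monomial (m - a).toNat (c m)
  have hcoeff : ∀ m ∈ s, a ≤ m → g.coeff (m - a).toNat = c m := by
    intro m hm ham
    rw [finsetSum_coeff, Finset.sum_eq_single m]
    · rw [coeff_monomial, if_pos rfl]
    · intro m' hm' hne
      by_cases hcm' : c m' = 0
      · simp [hcm']
      · rw [coeff_monomial, if_neg (by have := ha_le m' hm' hcm'; omega)]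
    · exact fun h => absurd hm h
  have hg0 : g.coeff 0 ≠ 0 := by simpa using (hcoeff a has le_rfl).trans_ne hca
  obtain ⟨α, hα0, hα⟩ := exists_isRoot_ne_zero hg0 (show (b - a).toNat ≠ 0 by omega)
    ((hcoeff b hbs hab.le).trans_ne hcb)
  refine ⟨Units.mk0 α hα0, ?_⟩
  calc ∑ m ∈ s, c m * ↑(Units.mk0 α hα0 ^ m)
      = α ^ a * g.eval α := by
        rw [eval_finsetSum, Finset.mul_sum]
        refine Finset.sum_congr rfl fun m hm => ?_
        by_cases hcm : c m = 0
        · simp [hcm]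
        · have ham := ha_le m hm hcm
          rw [eval_monomial, Units.val_zpow_eq_zpow_val, Units.val_mk0, mul_left_comm,
            ← zpow_natCast, Int.toNat_of_nonneg (by omega), ← zpow_add₀ hα0, add_sub_cancel]
    _ = 0 := by rw [hα.eq_zero, mul_zero]

theorem not_injective_linearCA_of_zpow_root {F K : Type*} [Field F] [CommRing K] [Nontrivial K]
    [Algebra F K] {s : Finset ℤ} {c : ℤ → F} (α : Kˣ)
    (hα : ∑ i ∈ s, algebraMap F K (c i) * ↑(α ^ i) = 0) : ¬ Injective (linearCA s c) := by
  obtain ⟨φ, hφ⟩ := LinearMap.exists_leftInverse_of_injective (Algebra.linearMap F K)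
    (LinearMap.ker_eq_bot.mpr (algebraMap F K).injective)
  have hφ1 : φ 1 = 1 := by simpa using LinearMap.congr_fun hφ 1
  set x : ℤ → F := fun n => φ ↑(α ^ n)
  have hx : linearCA s c x = 0 := funext fun n => calc
    linearCA s c x n = φ (↑(α ^ n) * ∑ i ∈ s, algebraMap F K (c i) * ↑(α ^ i)) := by
      simp only [linearCA, x, Finset.mul_sum, map_sum, zpow_add, Units.val_mul]
      refine Finset.sum_congr rfl fun i _ => ?_
      rw [mul_left_comm, ← Algebra.smul_def, map_smul, smul_eq_mul]
    _ = 0 := by rw [hα, mul_zero, map_zero]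
  have hker : linearCA s c x = linearCA s c 0 := by
    rw [hx]
    funext n
    simp [linearCA]
  intro hinj
  have h0 : x 0 = 0 := congrFun (hinj hker) 0
  simp only [x, zpow_zero, Units.val_one, hφ1] at h0
  exact one_ne_zero h0

theorem eq_of_injective_linearCA {F : Type*} [Field F] {s : Finset ℤ} {c : ℤ → F}
    (h : Injective (linearCA s c)) {i j : ℤ} (hi : i ∈ s) (hj : j ∈ s) (hci : c i ≠ 0)
    (hcj : c j ≠ 0) : i = j := by
  by_contra hij
  obtain ⟨α, hα⟩ := exists_zpow_root (c := fun m => algebraMap F (AlgebraicClosure F) (c m))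
    hi hj hij (by simpa) (by simpa)
  exact not_injective_linearCA_of_zpow_root α hα h

namespace ZMod

theorem isUnit_or_isNilpotent_of_prime_pow {p : ℕ} (hp : p.Prime) (k : ℕ) (a : ZMod (p ^ k)) :
    IsUnit a ∨ IsNilpotent a := by
  have : NeZero (p ^ k) := ⟨pow_ne_zero _ hp.ne_zero⟩
  obtain ⟨m, rfl⟩ := ZMod.natCast_zmod_surjective a
  by_cases hm : m.Coprime p
  · exact .inl ((ZMod.isUnit_iff_coprime m _).mpr (hm.pow_right k))
  · refine .inr ⟨k, ?_⟩
    rw [← Nat.cast_pow, ZMod.natCast_eq_zero_iff]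
    exact pow_dvd_pow_of_dvd ((Nat.Prime.dvd_iff_not_coprime hp).mpr (fun h => hm h.symm)) k

variable {d n : ℕ}

def mulCofactor (h : d ∣ n) : ZMod d →+ ZMod n :=
  ZMod.lift d ⟨(AddMonoidHom.mulLeft ((n / d : ℕ) : ZMod n)).comp (Int.castAddHom (ZMod n)), by
    simp [← Nat.cast_mul, Nat.div_mul_cancel h]⟩

theorem mulCofactor_intCast (h : d ∣ n) (z : ℤ) :
    mulCofactor h z = ((n / d : ℕ) : ZMod n) * z :=
  ZMod.lift_coe _ _ z

theorem mul_mulCofactor (h : d ∣ n) (a : ZMod n) (b : ZMod d) :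
    a * mulCofactor h b = mulCofactor h (castHom h (ZMod d) a * b) := by
  obtain ⟨y, rfl⟩ := ZMod.intCast_surjective a
  obtain ⟨z, rfl⟩ := ZMod.intCast_surjective b
  rw [map_intCast (castHom h (ZMod d)) y, ← Int.cast_mul, mulCofactor_intCast,
    mulCofactor_intCast]
  push_cast
  ring

theorem mulCofactor_injective (h : d ∣ n) (hn : n ≠ 0) : Injective (mulCofactor h) := by
  refine (injective_iff_map_eq_zero _).mpr fun b hb => ?_
  obtain ⟨z, rfl⟩ := ZMod.intCast_surjective b
  obtain ⟨m, rfl⟩ := h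
  rw [mulCofactor_intCast, Nat.mul_div_cancel_left m (Nat.pos_of_ne_zero (left_ne_zero_of_mul hn)),
    ← Int.cast_natCast, ← Int.cast_mul, ZMod.intCast_zmod_eq_zero_iff_dvd, Nat.cast_mul,
    mul_comm (d : ℤ)] at hb
  have hm : (m : ℤ) ≠ 0 := by exact_mod_cast right_ne_zero_of_mul hn
  exact (ZMod.intCast_zmod_eq_zero_iff_dvd z d).mpr ((mul_dvd_mul_iff_left hm).mp hb)

theorem eq_of_injective_linearCA_of_isUnit {p k : ℕ} [Fact p.Prime] (hk : k ≠ 0)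
    {s : Finset ℤ} {c : ℤ → ZMod (p ^ k)} (h : Injective (linearCA s c)) {i j : ℤ}
    (hi : i ∈ s) (hj : j ∈ s) (hci : IsUnit (c i)) (hcj : IsUnit (c j)) : i = j := by
  have hdvd : p ∣ p ^ k := dvd_pow_self p hk
  set ρ := castHom hdvd (ZMod p)
  have hρ : Injective (linearCA s (ρ ∘ c)) :=
    injective_linearCA_comp ρ (mulCofactor_injective hdvd (NeZero.ne _)) (mul_mulCofactor hdvd) h
  exact eq_of_injective_linearCA hρ hi hj (hci.map ρ).ne_zero (hcj.map ρ).ne_zero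

end ZMod

theorem stmt3_general (p k : ℕ) (hp : p.Prime) (hk : 1 ≤ k) (l r : ℤ)
    (lam : ℤ → ZMod (p ^ k)) (hsupp : ∀ i, i ∉ Finset.Icc l r → lam i = 0) :
    Function.Bijective
        (fun (x : ℤ → ZMod (p ^ k)) (n : ℤ) => ∑ i ∈ Finset.Icc l r, lam i * x (n + i)) ↔
    ∃! j : ℤ, IsUnit (lam j) := by
  have : Fact p.Prime := ⟨hp⟩
  have : Fact (1 < p ^ k) := ⟨Nat.one_lt_pow (by omega) hp.one_lt⟩
  have hdich := ZMod.isUnit_or_isNilpotent_of_prime_pow hp k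
  have hmem : ∀ j, IsUnit (lam j) → j ∈ Finset.Icc l r := fun j hj => by
    by_contra h
    exact not_isUnit_zero (hsupp j h ▸ hj)
  change Bijective (linearCA (Finset.Icc l r) lam) ↔ _
  constructor
  · intro hbij
    obtain ⟨j, -, hj⟩ := exists_not_isNilpotent_of_surjective hbij.2
    replace hj : IsUnit (lam j) := (hdich _).resolve_right hj
    exact ⟨j, hj, fun i hi =>
      ZMod.eq_of_injective_linearCA_of_isUnit (by omega) hbij.1 (hmem i hi) (hmem j hj) hi hj⟩
  · rintro ⟨j, hj, huniq⟩
    refine bijective_linearCA_of_isUnit (isUnit_sum_C_mul_T (hmem j hj) hj fun i _ hij => ?_)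
    exact (hdich _).resolve_left (mt (huniq i) hij)

/-- The linear cellular automaton `T_{f[l,r]}` on `(ZMod (p^k))^ℤ`, with local rule
`f(x_l,...,x_r) = Σ_{i=l}^r λ_i x_i (mod p^k)` (`p` prime, coefficients supported on
`[l,r]` and not all zero), is invertible (bijective) iff there is a unique index `j`
whose coefficient `λ_j` is coprime to `p`, i.e. a unit of `ZMod (p^k)`
(equivalently `p ∣ λ_i` for all `i ≠ j` and `gcd(p, λ_j) = 1`). -/
theorem stmt3 (p k : ℕ) (hp : p.Prime) (hk : 1 ≤ k) (l r : ℤ) (hlr : l ≤ r)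
    (lam : ℤ → ZMod (p ^ k)) (hsupp : ∀ i, i ∉ Finset.Icc l r → lam i = 0)
    (hne : ∃ i, lam i ≠ 0) :
    Function.Bijective
        (fun (x : ℤ → ZMod (p ^ k)) (n : ℤ) => ∑ i ∈ Finset.Icc l r, lam i * x (n + i)) ↔
    ∃! j : ℤ, IsUnit (lam j) :=
  stmt3_general p k hp hk l r lam hsupp
end

section
/- If the linear local rule f(x_l,...,x_r) = Σ_{i=l}^{r} λ_i x_i (mod p^k) over Z_{p^k} (p prime) satisfies gcd(p, λ_r) = 1 and p | λ_i for all i ≠ r, then f is right permutative and the cellular automaton T_{f[l,r]} is invertible. -/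
/-!
The cellular automaton is the linear operator `T = ∑ λ_i • σ_i` on `ℤ → R`, where `σ_i` is the shift
by `i`. Shifts are invertible and commute with one another, so `λ_r • σ_r` is a unit commuting with the rest
of `T`; every other term has a coefficient divisible by `p`, hence nilpotent in `ZMod (p ^ k)`, so the
rest is nilpotent and `T` is a unit plus a commuting nilpotent, i.e. a unit.
-/

open Finset Function

section RightPermutative

variable {ι R : Type*} [DecidableEq ι] [Ring R]

theorem bijective_sum_mul_update {s : Finset ι} {lam : ι → R} {r : ι} (hr : r ∈ s)
    (hu : IsUnit (lam r)) (x : ι → R) :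
    Bijective fun a : R => ∑ i ∈ s, lam i * update x r a i := by
  have hsplit : ∀ a : R, ∑ i ∈ s, lam i * update x r a i
      = lam r * a + ∑ i ∈ s.erase r, lam i * x i := fun a => by
    rw [← add_sum_erase _ _ hr, update_self]
    congr 1
    exact sum_congr rfl fun i hi => by rw [update_of_ne (ne_of_mem_erase hi)]
  simp only [hsplit]
  exact (Equiv.addRight _).bijective.comp (IsUnit.isUnit_iff_mulLeft_bijective.mp hu)

end RightPermutative

namespace LinearCA

variable {R : Type*} [CommRing R]

abbrev shift (d : ℤ) : Module.End R (ℤ → R) := LinearMap.funLeft R R (· + d)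

theorem isUnit_shift (d : ℤ) : IsUnit (shift (R := R) d) :=
  (Module.End.isUnit_iff _).mpr
    ⟨LinearMap.funLeft_injective_of_surjective R R _ (add_right_surjective d),
      LinearMap.funLeft_surjective_of_injective R R _ (add_left_injective d)⟩

theorem commute_smul_shift (a b : R) (i j : ℤ) :
    Commute (a • shift (R := R) i) (b • shift j) := by
  refine Commute.smul_left (Commute.smul_right ?_ b) a
  ext x n
  simp [add_right_comm]

def linearCA (s : Finset ℤ) (lam : ℤ → R) : Module.End R (ℤ → R) :=
  ∑ i ∈ s, lam i • shift i

theorem coe_linearCA (s : Finset ℤ) (lam : ℤ → R) :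
    ⇑(linearCA s lam) = fun x n => ∑ i ∈ s, lam i * x (n + i) := by
  ext x n
  simp [linearCA, Finset.sum_apply]

theorem isUnit_linearCA {s : Finset ℤ} {lam : ℤ → R} {r : ℤ} (hr : r ∈ s)
    (hu : IsUnit (lam r)) (hnil : ∀ i ∈ s, i ≠ r → IsNilpotent (lam i)) :
    IsUnit (linearCA s lam) := by
  rw [linearCA, ← add_sum_erase _ _ hr, add_comm]
  refine IsNilpotent.isUnit_add_right_of_commute ?_ ?_ ?_
  · refine Commute.isNilpotent_sum (fun i hi => ?_) fun i j _ _ => commute_smul_shift _ _ i j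
    obtain ⟨k, hk⟩ := hnil i (mem_of_mem_erase hi) (ne_of_mem_erase hi)
    exact ⟨k, by rw [smul_pow, hk, zero_smul]⟩
  · simpa [Units.smul_def] using (isUnit_shift (R := R) r).smul hu.unit
  · exact Commute.sum_left _ _ _ fun i _ => commute_smul_shift _ _ i r

end LinearCA

open LinearCA in
theorem stmt8_general (p k : ℕ) (l r : ℤ) (hlr : l ≤ r)
    (lam : ℤ → ZMod (p ^ k)) (hr : IsUnit (lam r))
    (hothers : ∀ i ∈ Finset.Icc l r, i ≠ r → (p : ZMod (p ^ k)) ∣ lam i) :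
    (∀ x : ℤ → ZMod (p ^ k),
      Function.Bijective fun a : ZMod (p ^ k) =>
        ∑ i ∈ Finset.Icc l r, lam i * Function.update x r a i) ∧
    Function.Bijective
      (fun (x : ℤ → ZMod (p ^ k)) (n : ℤ) => ∑ i ∈ Finset.Icc l r, lam i * x (n + i)) := by
  have hrIcc : r ∈ Finset.Icc l r := Finset.mem_Icc.mpr ⟨hlr, le_rfl⟩
  have hp_nil : IsNilpotent (p : ZMod (p ^ k)) := ⟨k, by exact_mod_cast ZMod.natCast_self (p ^ k)⟩
  have hnil : ∀ i ∈ Finset.Icc l r, i ≠ r → IsNilpotent (lam i) := fun i hi hir => by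
    obtain ⟨c, hc⟩ := hothers i hi hir
    exact hc ▸ (Commute.all _ _).isNilpotent_mul_right hp_nil
  refine ⟨bijective_sum_mul_update hrIcc hr, ?_⟩
  rw [← coe_linearCA]
  exact (Module.End.isUnit_iff _).mp (isUnit_linearCA hrIcc hr hnil)

/-- If the linear local rule `f(x_l,...,x_r) = Σ_{i=l}^r λ_i x_i (mod p^k)` over
`ZMod (p^k)` (`p` prime) satisfies `gcd(p, λ_r) = 1` (i.e. `λ_r` is a unit) and
`p ∣ λ_i` for all `i ≠ r`, then `f` is right permutative (the map in the last variable
is a bijection for each fixed choice of the other variables) and the cellular automaton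
`T_{f[l,r]}` is invertible (bijective). -/
theorem stmt8 (p k : ℕ) (hp : p.Prime) (hk : 1 ≤ k) (l r : ℤ) (hlr : l ≤ r)
    (lam : ℤ → ZMod (p ^ k)) (hr : IsUnit (lam r))
    (hothers : ∀ i ∈ Finset.Icc l r, i ≠ r → (p : ZMod (p ^ k)) ∣ lam i) :
    (∀ x : ℤ → ZMod (p ^ k),
      Function.Bijective fun a : ZMod (p ^ k) =>
        ∑ i ∈ Finset.Icc l r, lam i * Function.update x r a i) ∧
    Function.Bijective
      (fun (x : ℤ → ZMod (p ^ k)) (n : ℤ) => ∑ i ∈ Finset.Icc l r, lam i * x (n + i)) :=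
  stmt8_general p k l r hlr lam hr hothers
end

section
/- Any surjective cellular automaton T_{f[l,r]} on Z_m^Z preserves the uniform Bernoulli measure μ: for every Borel set A, μ(T^{-1}A) = μ(A). -/
/-!
Hedlund's balance theorem: if the block map of a local rule with window `k + 1` is onto on words
of every length, then every word `v` of length `n` has exactly `N_v = |A| ^ k` preimages of length
`n + k`. For the lower bound, a preimage of the word `v g₁ v g₂ ⋯ v gₚ` (gaps `gᵢ` of length `k`)
splits into `p` preimages of `v` and a tail of length `k`, and it determines the gaps; hence
`|A| ^ (k p) ≤ N_v ^ p |A| ^ k` for every `p`, so `|A| ^ k ≤ N_v`. Equality follows because the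
fibres partition the `|A| ^ (n + k)` words of length `n + k`.

Consequently the image of the uniform Bernoulli measure gives every cylinder of length `n` the mass
`|A| ^ k · |A| ^ (-(n + k)) = |A| ^ (-n)`, and a finite measure on `A ^ ℤ` is determined by its
finite-dimensional marginals, which are in turn determined by the masses of cylinders.
-/

open MeasureTheory
open scoped ENNReal

instance (m : ℕ) : MeasurableSpace (ZMod m) := ⊤

theorem le_of_forall_pow_le_pow_mul {K : Type*} [Field K] [LinearOrder K] [IsStrictOrderedRing K]
    [Archimedean K] {a b c : K} (hb : 0 ≤ b) (h : ∀ p : ℕ, a ^ p ≤ b ^ p * c) : a ≤ b := by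
  rcases hb.eq_or_lt with rfl | hb
  · simpa using h 1
  by_contra! hba
  obtain ⟨p, hp⟩ := pow_unbounded_of_one_lt c ((one_lt_div hb).mpr hba)
  rw [div_pow, lt_div_iff₀ (pow_pos hb p)] at hp
  linarith [h p]

namespace CellularAutomaton

variable {A : Type*} {k : ℕ}

def blockMap (f : (Fin (k + 1) → A) → A) (n : ℕ) (u : Fin (n + k) → A) : Fin n → A :=
  fun i => f fun t => u ⟨i + t, by omega⟩

def globalMap (f : (Fin (k + 1) → A) → A) (l : ℤ) (x : ℤ → A) : ℤ → A :=
  fun n => f fun i => x (n + l + i)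

def window (a : ℤ) (n : ℕ) (x : ℤ → A) : Fin n → A :=
  fun i => x (a + i)

section Balance

variable (f : (Fin (k + 1) → A) → A) {n : ℕ}

/-- Block `i` occupies positions `[i (n + k), (i + 1) (n + k))`; the tail comes last. -/
def blocksEquiv (p n k : ℕ) : (Fin p × Fin (n + k)) ⊕ Fin k ≃ Fin (p * (n + k) + k) :=
  (finProdFinEquiv.sumCongr (Equiv.refl _)).trans finSumFinEquiv

def periodicWord {p : ℕ} (v : Fin n → A) (g : Fin p → Fin k → A) : Fin (p * (n + k)) → A :=
  fun c => let ij := finProdFinEquiv.symm c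
    if h : (ij.2 : ℕ) < n then v ⟨ij.2, h⟩ else g ij.1 ⟨ij.2 - n, by omega⟩

lemma periodicWord_block {p : ℕ} (v : Fin n → A) (g : Fin p → Fin k → A) (i : Fin p)
    (j : Fin n) : periodicWord v g (finProdFinEquiv (i, Fin.castAdd k j)) = v j := by
  simp [periodicWord]

lemma periodicWord_gap {p : ℕ} (v : Fin n → A) (g : Fin p → Fin k → A) (i : Fin p)
    (j : Fin k) : periodicWord v g (finProdFinEquiv (i, Fin.natAdd n j)) = g i j := by
  simp [periodicWord]

lemma blockMap_blocksEquiv {p : ℕ} (X : Fin (p * (n + k) + k) → A) (i : Fin p) (j : Fin n) :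
    blockMap f (p * (n + k)) X (finProdFinEquiv (i, Fin.castAdd k j)) =
      blockMap f n (fun j' => X (blocksEquiv p n k (.inl (i, j')))) j := by
  simp only [blockMap, blocksEquiv]
  congr 1
  funext t
  congr 1
  ext
  simp only [finProdFinEquiv, Equiv.coe_fn_mk, Fin.val_castAdd, Equiv.trans_apply,
    Equiv.sumCongr_apply, Equiv.coe_refl, Sum.map_inl, finSumFinEquiv_apply_left, Fin.castAdd_mk]
  ring

variable [Fintype A] [DecidableEq A]

lemma pow_le_card_blockMap_fiber_pow_mul (hf : ∀ n, Function.Surjective (blockMap f n))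
    (v : Fin n → A) (p : ℕ) :
    (Fintype.card A ^ k) ^ p ≤
      Fintype.card {u // blockMap f n u = v} ^ p * Fintype.card A ^ k := by
  choose X hX using fun g : Fin p → Fin k → A => hf _ (periodicWord v g)
  let e := blocksEquiv p n k
  have hblock (g) (i) : blockMap f n (fun j => X g (e (.inl (i, j)))) = v := by
    funext j
    rw [← blockMap_blocksEquiv, hX, periodicWord_block]
  let Φ (g : Fin p → Fin k → A) : (Fin p → {u // blockMap f n u = v}) × (Fin k → A) :=
    (fun i => ⟨_, hblock g i⟩, fun j => X g (e (.inr j)))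
  have hΦ : Function.Injective Φ := by
    intro g₁ g₂ h
    have hXeq : X g₁ = X g₂ := e.surjective.injective_comp_right <| by
      funext c
      rcases c with ⟨i, j⟩ | j
      · exact congrFun (congrArg Subtype.val (congrFun (congrArg Prod.fst h) i)) j
      · exact congrFun (congrArg Prod.snd h) j
    have hword : periodicWord v g₁ = periodicWord v g₂ := by rw [← hX, ← hX, hXeq]
    funext i j
    rw [← periodicWord_gap v g₁, ← periodicWord_gap v g₂, hword]
  simpa [Fintype.card_fun, ← pow_mul, mul_comm k] using Fintype.card_le_of_injective Φ hΦ

lemma card_pow_le_card_blockMap_fiber (hf : ∀ n, Function.Surjective (blockMap f n))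
    (v : Fin n → A) : Fintype.card A ^ k ≤ Fintype.card {u // blockMap f n u = v} := by
  have h (p : ℕ) : ((Fintype.card A ^ k : ℕ) : ℝ) ^ p ≤
      (Fintype.card {u // blockMap f n u = v} : ℝ) ^ p * (Fintype.card A ^ k : ℕ) := by
    exact_mod_cast pow_le_card_blockMap_fiber_pow_mul f hf v p
  exact_mod_cast le_of_forall_pow_le_pow_mul (Nat.cast_nonneg _) h

theorem card_blockMap_fiber (hf : ∀ n, Function.Surjective (blockMap f n)) (v : Fin n → A) :
    Fintype.card {u // blockMap f n u = v} = Fintype.card A ^ k := by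
  have htotal : ∑ v' : Fin n → A, Fintype.card {u // blockMap f n u = v'} =
      ∑ _v' : Fin n → A, Fintype.card A ^ k := by
    rw [← Fintype.card_sigma, Fintype.card_congr (Equiv.sigmaFiberEquiv _)]
    simp [pow_add]
  exact ((Finset.sum_eq_sum_iff_of_le fun v' _ => card_pow_le_card_blockMap_fiber f hf v').mp
    htotal.symm v (Finset.mem_univ v)).symm

end Balance

variable {f : (Fin (k + 1) → A) → A} {l : ℤ}

lemma window_globalMap (a : ℤ) (n : ℕ) (x : ℤ → A) :
    window a n (globalMap f l x) = blockMap f n (window (a + l) (n + k) x) := by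
  funext i
  simp only [window, blockMap, globalMap]
  congr 1
  funext t
  congr 1
  push_cast
  ring

lemma surjective_blockMap [Nonempty A] (hsurj : Function.Surjective (globalMap f l)) (n : ℕ) :
    Function.Surjective (blockMap f n) := by
  intro v
  obtain ⟨x, hx⟩ := hsurj <|
    Function.extend (fun i : Fin n => (i : ℤ)) v fun _ => Classical.arbitrary A
  refine ⟨window l (n + k) x, ?_⟩
  rw [← zero_add l, ← window_globalMap, hx]
  funext i
  simp only [window, zero_add]
  exact ((Nat.cast_injective (R := ℤ)).comp Fin.val_injective).extend_apply _ _ i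

lemma window_succ_preimage_singleton (a : ℤ) (s : ℕ) (j : ℕ → A) :
    window a (s + 1) ⁻¹' {fun i : Fin (s + 1) => j i} =
      {x | ∀ t : ℕ, t ≤ s → x (a + t) = j t} := by
  ext x
  simp only [Set.mem_preimage, Set.mem_singleton_iff, funext_iff, window, Fin.forall_iff,
    Set.mem_ofPred_eq, Nat.lt_succ_iff]

section Measure

variable [MeasurableSpace A]

lemma measurable_window (a : ℤ) (n : ℕ) : Measurable (window (A := A) a n) :=
  measurable_pi_lambda _ fun _ => measurable_pi_apply _

lemma measurable_globalMap [MeasurableSingletonClass A] [Finite A] :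
    Measurable (globalMap f l) :=
  measurable_pi_lambda _ fun n => (measurable_of_finite f).comp (measurable_window (n + l) (k + 1))

theorem Measure.ext_of_map_window {ν₁ ν₂ : Measure (ℤ → A)} [IsFiniteMeasure ν₁]
    (h : ∀ a n, ν₁.map (window a n) = ν₂.map (window a n)) : ν₁ = ν₂ := by
  refine IsProjectiveLimit.unique (P := fun I => ν₁.map I.restrict) (fun _ => rfl) fun I => ?_
  let N := I.sup Int.natAbs
  have hN (i : I) : (i : ℤ).natAbs ≤ N := Finset.le_sup (f := Int.natAbs) i.2
  let ρ (w : Fin (2 * N + 1) → A) (i : I) : A := w ⟨(i + N : ℤ).toNat, by have := hN i; omega⟩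
  have hρ : Measurable ρ := measurable_pi_lambda _ fun _ => measurable_pi_apply _
  have hrestrict : (I.restrict : (ℤ → A) → _) = ρ ∘ window (-N) (2 * N + 1) := by
    funext x i
    simp only [Finset.restrict, Function.comp, ρ, window]
    congr 1
    have := hN i
    omega
  simp only [hrestrict, ← Measure.map_map hρ (measurable_window _ _), h]

variable [Fintype A]

def IsUniformBernoulli (μ : Measure (ℤ → A)) : Prop :=
  ∀ a n (u : Fin n → A), μ (window a n ⁻¹' {u}) = (Fintype.card A : ℝ≥0∞)⁻¹ ^ n

variable [MeasurableSingletonClass A] {μ ν : Measure (ℤ → A)}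

theorem IsUniformBernoulli.ext [IsFiniteMeasure μ] (hμ : IsUniformBernoulli μ)
    (hν : IsUniformBernoulli ν) : μ = ν :=
  Measure.ext_of_map_window fun a n => Measure.ext_of_singleton fun u => by
    rw [Measure.map_apply (measurable_window a n) (measurableSet_singleton u),
      Measure.map_apply (measurable_window a n) (measurableSet_singleton u), hμ, hν]

theorem IsUniformBernoulli.map_globalMap [DecidableEq A] [Nonempty A]
    (hμ : IsUniformBernoulli μ) (hsurj : Function.Surjective (globalMap f l)) :
    IsUniformBernoulli (μ.map (globalMap f l)) := by
  intro a n u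
  have hpre : globalMap f l ⁻¹' (window a n ⁻¹' {u}) =
      window (a + l) (n + k) ⁻¹' ↑(Finset.univ.filter fun w => blockMap f n w = u) := by
    ext x
    simp [window_globalMap]
  rw [Measure.map_apply measurable_globalMap (measurable_window a n (measurableSet_singleton u)),
    hpre, ← sum_measure_preimage_singleton _ fun _ _ =>
      measurable_window _ _ (measurableSet_singleton _),
    Finset.sum_congr rfl fun w _ => hμ (a + l) (n + k) w]
  have hcard : (Finset.univ.filter fun w => blockMap f n w = u).card = Fintype.card A ^ k := by
    rw [← Fintype.card_subtype, card_blockMap_fiber f (surjective_blockMap hsurj)]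
  have hA : (Fintype.card A : ℝ≥0∞) ≠ 0 := by simp
  simp only [Finset.sum_const, hcard, nsmul_eq_mul, Nat.cast_pow, pow_add]
  rw [mul_left_comm, ← mul_pow, ENNReal.mul_inv_cancel hA (ENNReal.natCast_ne_top _), one_pow,
    mul_one]

theorem measurePreserving_globalMap [DecidableEq A] [Nonempty A] [IsFiniteMeasure μ]
    (hsurj : Function.Surjective (globalMap f l)) (hμ : IsUniformBernoulli μ) :
    MeasurePreserving (globalMap f l) μ μ :=
  ⟨measurable_globalMap, (hμ.map_globalMap hsurj).ext hμ⟩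

end Measure

end CellularAutomaton

open CellularAutomaton

/-- Any surjective cellular automaton `T_{f[l,r]}` on `(ZMod m)^ℤ` preserves the uniform
Bernoulli measure `μ` (the probability measure giving each cylinder of length `s+1` the
measure `m^{-(s+1)}`): for every Borel set `A`, `μ(T⁻¹A) = μ(A)`. -/
theorem stmt9 (m : ℕ) (hm : 2 ≤ m) (l r : ℤ) (hlr : l ≤ r)
    (f : (Fin (r - l + 1).toNat → ZMod m) → ZMod m)
    (T : (ℤ → ZMod m) → ℤ → ZMod m)
    (hT : ∀ x n, T x n = f fun i => x (n + l + (i : ℤ)))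
    (hsurj : Function.Surjective T)
    (μ : Measure (ℤ → ZMod m)) [IsProbabilityMeasure μ]
    (hμ : ∀ (a : ℤ) (s : ℕ) (j : ℕ → ZMod m),
      μ {x | ∀ t : ℕ, t ≤ s → x (a + (t : ℤ)) = j t} = ((m : ℝ≥0∞))⁻¹ ^ (s + 1)) :
    MeasurePreserving T μ μ := by
  have : NeZero m := ⟨by omega⟩
  have hbern : IsUniformBernoulli μ := by
    rintro a (_ | s) u
    · have huniv : window a 0 ⁻¹' {u} = Set.univ :=
        Set.eq_univ_of_forall fun x => Subsingleton.elim (window a 0 x) u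
      simp [huniv]
    · have hu : u = fun i : Fin (s + 1) => u (Fin.ofNat _ i) := by simp
      rw [hu, window_succ_preimage_singleton a s fun t => u (Fin.ofNat _ t), ZMod.card]
      exact hμ a s _
  obtain ⟨k, hk⟩ : ∃ k, (r - l + 1).toNat = k + 1 := ⟨(r - l).toNat, by omega⟩
  revert f
  rw [hk]
  intro f hT
  obtain rfl : T = globalMap f l := funext₂ hT
  exact measurePreserving_globalMap hsurj hbern
end

section
/- For a linear cellular automaton T_{f[l,r]} over Z_m with r < 0 or l > 0 (strictly one-sided neighborhood) that is surjective, T_{f[l,r]} is strong mixing with respect to the uniform Bernoulli measure. -/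
/-!
The measure of a cylinder set is the proportion of admissible words on its window, and `T` pulls
a cylinder on `[a, b]` back to a cylinder on `[a + l, b + r]` through the local rule, a surjective
homomorphism of finite groups. Such a homomorphism preserves proportions (its fibres are cosets of
the kernel), so `T` preserves `μ`. The neighbourhood being one-sided, the window of `T^{-n} E`
drifts off to infinity; once it is disjoint from the window of `F`, the two cylinders are
independent and `μ (T^{-n} E ∩ F) = μ E * μ F` exactly. Cylinders form an algebra generating the
σ-algebra, hence approximate every measurable set in measure, and mixing passes to the limit.
-/

open MeasureTheory Filter
open scoped ENNReal Topology

instance (m : ℕ) : MeasurableSingletonClass (ZMod m) := ⟨fun _ => MeasurableSpace.measurableSet_top⟩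

open Function
open scoped symmDiff

theorem tendsto_of_forall_approx {α β : Type*} [PseudoMetricSpace β] {l : Filter α}
    {f : α → β} {b : β}
    (h : ∀ ε > 0, ∃ (g : α → β) (c : β),
      Tendsto g l (𝓝 c) ∧ (∀ a, dist (f a) (g a) ≤ ε) ∧ dist c b ≤ ε) :
    Tendsto f l (𝓝 b) := by
  refine Metric.tendsto_nhds.2 fun ε hε => ?_
  obtain ⟨g, c, hg, hfg, hcb⟩ := h (ε / 3) (by positivity)
  filter_upwards [Metric.tendsto_nhds.1 hg (ε / 3) (by positivity)] with a ha
  calc dist (f a) b ≤ dist (f a) (g a) + dist (g a) c + dist c b := dist_triangle4 _ _ _ _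
    _ < ε := by linarith [hfg a]

section Mixing

variable {X : Type*} [MeasurableSpace X] {μ : Measure X}

lemma Set.inter_symmDiff_inter_subset {α : Type*} (s t s' t' : Set α) :
    (s ∩ t) ∆ (s' ∩ t') ⊆ s ∆ s' ∪ t ∆ t' := by
  intro x
  simp only [Set.mem_symmDiff, Set.mem_inter_iff, Set.mem_union]
  tauto

lemma dist_measureReal_iterate_preimage_inter_le [IsFiniteMeasure μ] {T : X → X}
    (hT : MeasurePreserving T μ μ) (n : ℕ) {A B E F : Set X} (hA : MeasurableSet A)
    (hB : MeasurableSet B) (hE : MeasurableSet E) (hF : MeasurableSet F) :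
    dist (μ.real (T^[n] ⁻¹' A ∩ B)) (μ.real (T^[n] ⁻¹' E ∩ F)) ≤
      μ.real (A ∆ E) + μ.real (B ∆ F) := by
  have hTn := hT.iterate n
  calc dist (μ.real (T^[n] ⁻¹' A ∩ B)) (μ.real (T^[n] ⁻¹' E ∩ F))
      ≤ μ.real ((T^[n] ⁻¹' A ∩ B) ∆ (T^[n] ⁻¹' E ∩ F)) :=
        abs_measureReal_sub_le_measureReal_symmDiff
          ((hA.preimage hTn.measurable).inter hB).nullMeasurableSet
          ((hE.preimage hTn.measurable).inter hF).nullMeasurableSet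
    _ ≤ μ.real (T^[n] ⁻¹' (A ∆ E) ∪ B ∆ F) := by
        rw [Set.preimage_symmDiff]
        exact measureReal_mono (Set.inter_symmDiff_inter_subset _ _ _ _)
    _ ≤ μ.real (T^[n] ⁻¹' (A ∆ E)) + μ.real (B ∆ F) := measureReal_union_le _ _
    _ = μ.real (A ∆ E) + μ.real (B ∆ F) := by
        rw [hTn.measureReal_preimage (hA.symmDiff hE).nullMeasurableSet]

lemma dist_measureReal_mul_le [IsProbabilityMeasure μ] {A B E F : Set X}
    (hA : MeasurableSet A) (hB : MeasurableSet B) (hE : MeasurableSet E)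
    (hF : MeasurableSet F) :
    dist (μ.real E * μ.real F) (μ.real A * μ.real B) ≤ μ.real (A ∆ E) + μ.real (B ∆ F) := by
  have hAE := abs_measureReal_sub_le_measureReal_symmDiff (μ := μ) hA.nullMeasurableSet
    hE.nullMeasurableSet
  have hBF := abs_measureReal_sub_le_measureReal_symmDiff (μ := μ) hB.nullMeasurableSet
    hF.nullMeasurableSet
  rw [Real.dist_eq, abs_sub_comm]
  calc |μ.real A * μ.real B - μ.real E * μ.real F|
      = |(μ.real A - μ.real E) * μ.real B + μ.real E * (μ.real B - μ.real F)| := by ring_nf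
    _ ≤ |μ.real A - μ.real E| * μ.real B + μ.real E * |μ.real B - μ.real F| := by
        refine (abs_add_le _ _).trans ?_
        rw [abs_mul, abs_mul, abs_of_nonneg measureReal_nonneg,
          abs_of_nonneg measureReal_nonneg]
    _ ≤ μ.real (A ∆ E) * 1 + 1 * μ.real (B ∆ F) := by
        gcongr
        · exact measureReal_le_one
        · exact measureReal_le_one
    _ = μ.real (A ∆ E) + μ.real (B ∆ F) := by ring

theorem tendsto_measure_iterate_preimage_inter_of_measureDense [IsProbabilityMeasure μ]
    {T : X → X} (hT : MeasurePreserving T μ μ) {𝒜 : Set (Set X)} (h𝒜 : μ.MeasureDense 𝒜)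
    (hmix : ∀ E ∈ 𝒜, ∀ F ∈ 𝒜,
      Tendsto (fun n => μ (T^[n] ⁻¹' E ∩ F)) atTop (𝓝 (μ E * μ F)))
    {A B : Set X} (hA : MeasurableSet A) (hB : MeasurableSet B) :
    Tendsto (fun n => μ (T^[n] ⁻¹' A ∩ B)) atTop (𝓝 (μ A * μ B)) := by
  have toReal_iff : ∀ {E F : Set X}, Tendsto (fun n => μ.real (T^[n] ⁻¹' E ∩ F)) atTop
      (𝓝 (μ.real E * μ.real F)) ↔ Tendsto (fun n => μ (T^[n] ⁻¹' E ∩ F)) atTop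
      (𝓝 (μ E * μ F)) := fun {E F} => by
    rw [← ENNReal.tendsto_toReal_iff (fun _ => measure_ne_top _ _) (by finiteness),
      ENNReal.toReal_mul]
    rfl
  refine toReal_iff.1 (tendsto_of_forall_approx fun ε hε => ?_)
  obtain ⟨E, hE, hAE⟩ := h𝒜.approx A hA (measure_ne_top μ A) (ε / 2) (by positivity)
  obtain ⟨F, hF, hBF⟩ := h𝒜.approx B hB (measure_ne_top μ B) (ε / 2) (by positivity)
  have hAE' : μ.real (A ∆ E) < ε / 2 := ENNReal.toReal_lt_of_lt_ofReal hAE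
  have hBF' : μ.real (B ∆ F) < ε / 2 := ENNReal.toReal_lt_of_lt_ofReal hBF
  refine ⟨_, _, toReal_iff.2 (hmix E hE F hF), fun n => ?_, ?_⟩
  · exact (dist_measureReal_iterate_preimage_inter_le hT n hA hB (h𝒜.measurable E hE)
      (h𝒜.measurable F hF)).trans (by linarith)
  · exact (dist_measureReal_mul_le hA hB (h𝒜.measurable E hE) (h𝒜.measurable F hF)).trans
      (by linarith)

end Mixing

lemma AddMonoidHom.ncard_preimage_of_surjective {G H : Type*} [AddGroup G] [AddGroup H]
    (f : G →+ H) (hf : Surjective f) (S : Set H) :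
    (f ⁻¹' S).ncard = S.ncard * Nat.card f.ker := by
  obtain ⟨σ, hσ⟩ := hf.hasRightInverse
  let e : f ⁻¹' S ≃ S × f.ker :=
    { toFun := fun g => (⟨f g, g.2⟩, ⟨-σ (f g) + g, by simp [hσ (f g)]⟩)
      invFun := fun p => ⟨σ p.1 + p.2, by simp [hσ p.1, p.2.2 |> AddMonoidHom.mem_ker.1]⟩
      left_inv := fun g => by simp
      right_inv := fun p => by ext <;> simp [hσ p.1, p.2.2 |> AddMonoidHom.mem_ker.1] }
  rw [← Nat.card_coe_set_eq, Nat.card_congr e, Nat.card_prod, Nat.card_coe_set_eq]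

lemma AddMonoidHom.ncard_preimage_div_card {G H : Type*} [AddGroup G] [AddGroup H] [Finite G]
    (f : G →+ H) (hf : Surjective f) (S : Set H) :
    ((f ⁻¹' S).ncard : ℝ≥0∞) / Nat.card G = S.ncard / Nat.card H := by
  have hG : Nat.card G = Nat.card H * Nat.card f.ker := by
    simpa using f.ncard_preimage_of_surjective hf Set.univ
  rw [f.ncard_preimage_of_surjective hf, hG, Nat.cast_mul, Nat.cast_mul,
    ENNReal.mul_div_mul_right _ _ (Nat.cast_ne_zero.2 Nat.card_pos.ne') (by simp)]

lemma Finset.restrict_surjective {ι M : Type*} [Nonempty M] (u : Finset ι) :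
    Surjective (u.restrict (π := fun _ => M)) := fun p =>
  ⟨extend Subtype.val p fun _ => Classical.arbitrary M,
    funext fun _ => Subtype.val_injective.extend_apply _ _ _⟩

def Finset.restrict₂AddHom {ι M : Type*} [AddMonoid M] {s t : Finset ι} (h : s ⊆ t) :
    (t → M) →+ (s → M) where
  toFun := Finset.restrict₂ (π := fun _ => M) h
  map_zero' := rfl
  map_add' _ _ := rfl

lemma Finset.restrict₂AddHom_surjective {ι M : Type*} [AddMonoid M] {s t : Finset ι}
    (h : s ⊆ t) : Surjective (Finset.restrict₂AddHom (M := M) h) :=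
  Surjective.of_comp (g := t.restrict (π := fun _ => M)) s.restrict_surjective

lemma Finset.restrict_prod_surjective_of_disjoint {ι M : Type*} [Nonempty M] [DecidableEq ι]
    {u v : Finset ι} (huv : Disjoint u v) :
    Surjective (fun x : ι → M => (u.restrict x, v.restrict x)) := by
  intro ⟨p, q⟩
  obtain ⟨x, rfl⟩ := u.restrict_surjective p
  obtain ⟨y, rfl⟩ := v.restrict_surjective q
  refine ⟨fun i => if i ∈ u then x i else y i, Prod.ext (funext fun i => ?_) (funext fun i => ?_)⟩
  · simp [i.2]
  · simp [Finset.disjoint_right.1 huv i.2]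

namespace LinearCellularAutomaton

open Finset

variable {m : ℕ} {μ : Measure (ℤ → ZMod m)}

lemma measurableSet_cylinder [NeZero m] (u : Finset ℤ) (P : Set (u → ZMod m)) :
    MeasurableSet (cylinder (α := fun _ => ZMod m) u P) :=
  P.toFinite.measurableSet.cylinder u

lemma exists_subset_Icc (u : Finset ℤ) : ∃ a b, a ≤ b ∧ u ⊆ Icc a b := by
  obtain ⟨a, ha⟩ := u.bddBelow
  obtain ⟨b, hb⟩ := u.bddAbove
  exact ⟨min a b, max a b, min_le_max, fun i hi =>
    mem_Icc.2 ⟨(min_le_left a b).trans (ha hi), (hb hi).trans (le_max_right a b)⟩⟩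

lemma cylinder_eq_cylinder_of_subset {u v : Finset ℤ} (h : u ⊆ v) (P : Set (u → ZMod m)) :
    cylinder (α := fun _ => ZMod m) u P = cylinder v (restrict₂ h ⁻¹' P) :=
  rfl

def IsUniformBernoulli (μ : Measure (ℤ → ZMod m)) : Prop :=
  ∀ (a : ℤ) (s : ℕ) (j : ℕ → ZMod m),
    μ {x | ∀ t : ℕ, t ≤ s → x (a + (t : ℤ)) = j t} = ((m : ℝ≥0∞))⁻¹ ^ (s + 1)

lemma cylinder_Icc_singleton {a b : ℤ} (hab : a ≤ b) (p : Icc a b → ZMod m) :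
    cylinder (α := fun _ => ZMod m) (Icc a b) {p} = {x | ∀ t : ℕ, t ≤ (b - a).toNat →
      x (a + (t : ℤ)) = extend Subtype.val p 0 (a + (t : ℤ))} := by
  ext x
  simp only [mem_cylinder, Set.mem_singleton_iff, Set.mem_ofPred_eq, funext_iff,
    Subtype.forall, restrict_def, mem_Icc]
  constructor
  · intro h t ht
    have hmem : a + (t : ℤ) ∈ Icc a b := mem_Icc.2 ⟨by omega, by omega⟩
    rw [h _ (mem_Icc.1 hmem), ← Subtype.val_injective.extend_apply p 0 ⟨_, hmem⟩]
  · intro h i hi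
    have := h (i - a).toNat (by omega)
    rwa [show a + ((i - a).toNat : ℤ) = i by omega,
      Subtype.val_injective.extend_apply p 0 ⟨i, mem_Icc.2 hi⟩] at this

lemma measure_cylinder_Icc [NeZero m] (hμ : IsUniformBernoulli μ) {a b : ℤ} (hab : a ≤ b)
    (P : Set (Icc a b → ZMod m)) :
    μ (cylinder (Icc a b) P) = P.ncard / Nat.card (Icc a b → ZMod m) := by
  have hsingle : ∀ p, μ.map (Icc a b).restrict {p} = ((m : ℝ≥0∞))⁻¹ ^ #(Icc a b) := by
    intro p
    rw [Measure.map_apply (measurable_restrict _) (measurableSet_singleton p), ← cylinder,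
      cylinder_Icc_singleton hab, hμ, Int.card_Icc]
    congr 1
    omega
  obtain ⟨F, rfl⟩ : ∃ F : Finset (Icc a b → ZMod m), P = ↑F := ⟨_, P.toFinite.coe_toFinset.symm⟩
  rw [cylinder, ← Measure.map_apply (measurable_restrict _) F.measurableSet,
    ← sum_measure_singleton]
  simp only [hsingle, sum_const, nsmul_eq_mul, Set.ncard_coe_finset, Nat.card_fun, Nat.card_zmod,
    Nat.card_eq_finsetCard, Nat.cast_pow, ENNReal.inv_pow, div_eq_mul_inv]

lemma measure_cylinder [NeZero m] (hμ : IsUniformBernoulli μ) (u : Finset ℤ)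
    (P : Set (u → ZMod m)) :
    μ (cylinder u P) = P.ncard / Nat.card (u → ZMod m) := by
  obtain ⟨a, b, hab, hu⟩ := exists_subset_Icc u
  rw [cylinder_eq_cylinder_of_subset hu, measure_cylinder_Icc hμ hab]
  exact (restrict₂AddHom (M := ZMod m) hu).ncard_preimage_div_card
    (restrict₂AddHom_surjective hu) P

lemma measure_cylinder_inter_of_disjoint [NeZero m] (hμ : IsUniformBernoulli μ)
    {u v : Finset ℤ} (huv : Disjoint u v) (P : Set (u → ZMod m)) (Q : Set (v → ZMod m)) :
    μ (cylinder u P ∩ cylinder v Q) = μ (cylinder u P) * μ (cylinder v Q) := by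
  set f := (restrict₂AddHom (M := ZMod m) (subset_union_left (s₂ := v))).prod
    (restrict₂AddHom (subset_union_right (s₁ := u)))
  have hf : Surjective f :=
    Surjective.of_comp (g := (u ∪ v).restrict (π := fun _ => ZMod m))
      (restrict_prod_surjective_of_disjoint huv)
  change μ (cylinder (u ∪ v) (f ⁻¹' (P ×ˢ Q))) = _
  rw [measure_cylinder hμ, f.ncard_preimage_div_card hf, measure_cylinder hμ, measure_cylinder hμ,
    Set.ncard_prod, Nat.card_prod, Nat.cast_mul, Nat.cast_mul,
    ENNReal.mul_div_mul_comm (by simp) (by simp)]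

section Automaton

variable {l r : ℤ} {lam : ℤ → ZMod m} {T : (ℤ → ZMod m) → ℤ → ZMod m}

lemma add_mem_Icc_add {a b i j : ℤ} (hi : i ∈ Icc a b) (hj : j ∈ Icc l r) :
    i + j ∈ Icc (a + l) (b + r) := by
  rw [mem_Icc] at *
  omega

noncomputable def localRule (lam : ℤ → ZMod m) (l r a b : ℤ) :
    (Icc (a + l) (b + r) → ZMod m) →+ (Icc a b → ZMod m) where
  toFun w i := ∑ j ∈ (Icc l r).attach, lam j * w ⟨i + j, add_mem_Icc_add i.2 j.2⟩
  map_zero' := by ext; simp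
  map_add' _ _ := by ext; simp [mul_add, sum_add_distrib]

variable (hT : ∀ x n, T x n = ∑ i ∈ Icc l r, lam i * x (n + i))
include hT

lemma localRule_restrict (a b : ℤ) (x : ℤ → ZMod m) :
    localRule lam l r a b ((Icc (a + l) (b + r)).restrict x) = (Icc a b).restrict (T x) := by
  ext i
  simp only [localRule, AddMonoidHom.coe_mk, ZeroHom.coe_mk, restrict_def, hT]
  exact sum_attach (Icc l r) fun j => lam j * x (i + j)

lemma preimage_cylinder_Icc (a b : ℤ) (P : Set (Icc a b → ZMod m)) :
    T ⁻¹' cylinder (Icc a b) P =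
      cylinder (Icc (a + l) (b + r)) (localRule lam l r a b ⁻¹' P) := by
  ext x
  simp only [Set.mem_preimage, mem_cylinder, localRule_restrict hT]

lemma iterate_preimage_cylinder_Icc (a b : ℤ) (P : Set (Icc a b → ZMod m)) (n : ℕ) :
    ∃ Q : Set (Icc (a + n * l) (b + n * r) → ZMod m),
      T^[n] ⁻¹' cylinder (Icc a b) P = cylinder (Icc (a + n * l) (b + n * r)) Q := by
  induction n with
  | zero =>
    rw [Nat.cast_zero, zero_mul, zero_mul, add_zero, add_zero]
    exact ⟨P, rfl⟩
  | succ n ih =>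
    obtain ⟨Q, hQ⟩ := ih
    rw [Function.iterate_succ, Set.preimage_comp, hQ, preimage_cylinder_Icc hT,
      show a + (n + 1 : ℕ) * l = a + n * l + l by push_cast; ring,
      show b + (n + 1 : ℕ) * r = b + n * r + r by push_cast; ring]
    exact ⟨_, rfl⟩

lemma localRule_surjective (hsurj : Surjective T) (a b : ℤ) :
    Surjective (localRule lam l r a b) := by
  refine Surjective.of_comp (g := (Icc (a + l) (b + r)).restrict (π := fun _ => ZMod m)) ?_
  have : localRule lam l r a b ∘ (Icc (a + l) (b + r)).restrict = (Icc a b).restrict ∘ T :=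
    funext (localRule_restrict hT a b)
  rw [this]
  exact (Icc a b).restrict_surjective.comp hsurj

lemma measurable_of_forall_eq_sum [NeZero m] : Measurable T := by
  convert measurable_generateFrom (s := measurableCylinders fun _ : ℤ => ZMod m) (f := T) ?_
  · exact generateFrom_measurableCylinders.symm
  intro t ht
  obtain ⟨u, P, -, rfl⟩ := (mem_measurableCylinders t).1 ht
  obtain ⟨a, b, -, hu⟩ := exists_subset_Icc u
  rw [cylinder_eq_cylinder_of_subset hu, preimage_cylinder_Icc hT]
  exact measurableSet_cylinder _ _

lemma measure_preimage_cylinder [NeZero m] (hμ : IsUniformBernoulli μ)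
    (hsurj : Surjective T) (u : Finset ℤ) (P : Set (u → ZMod m)) :
    μ (T ⁻¹' cylinder u P) = μ (cylinder u P) := by
  obtain ⟨a, b, -, hu⟩ := exists_subset_Icc u
  rw [cylinder_eq_cylinder_of_subset hu, preimage_cylinder_Icc hT, measure_cylinder hμ,
    measure_cylinder hμ]
  exact (localRule lam l r a b).ncard_preimage_div_card (localRule_surjective hT hsurj a b) _

theorem measurePreserving [NeZero m] [IsProbabilityMeasure μ] (hμ : IsUniformBernoulli μ)
    (hsurj : Surjective T) : MeasurePreserving T μ μ := by
  have hTm : Measurable T := measurable_of_forall_eq_sum hT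
  refine ⟨hTm, ext_of_generate_finite _ generateFrom_measurableCylinders.symm
    isPiSystem_measurableCylinders (fun t ht => ?_) ?_⟩
  · obtain ⟨u, P, -, rfl⟩ := (mem_measurableCylinders t).1 ht
    rw [Measure.map_apply hTm (measurableSet_cylinder u P),
      measure_preimage_cylinder hT hμ hsurj]
  · rw [Measure.map_apply hTm MeasurableSet.univ, Set.preimage_univ]

omit hT in
lemma eventually_disjoint_Icc (hside : r < 0 ∨ 0 < l) (a b c d : ℤ) :
    ∀ᶠ n : ℕ in atTop, Disjoint (Icc (a + n * l) (b + n * r)) (Icc c d) := by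
  rw [eventually_atTop]
  refine ⟨(b - c).toNat + (d - a).toNat + 1, fun n hn => disjoint_left.2 fun i hi hi' => ?_⟩
  rw [mem_Icc] at hi hi'
  have hn' : ((b - c).toNat + (d - a).toNat + 1 : ℕ) ≤ (n : ℤ) := by exact_mod_cast hn
  push_cast at hn'
  have hbc := Int.self_le_toNat (b - c)
  have hda := Int.self_le_toNat (d - a)
  rcases hside with hr | hl
  · have : (n : ℤ) * r ≤ -n := by nlinarith
    linarith
  · have : (n : ℤ) ≤ n * l := by nlinarith
    linarith

theorem tendsto_measure_iterate_preimage_cylinder_inter [NeZero m] [IsProbabilityMeasure μ]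
    (hμ : IsUniformBernoulli μ) (hside : r < 0 ∨ 0 < l) (hsurj : Surjective T)
    {E F : Set (ℤ → ZMod m)} (hE : E ∈ measurableCylinders fun _ : ℤ => ZMod m)
    (hF : F ∈ measurableCylinders fun _ : ℤ => ZMod m) :
    Tendsto (fun n => μ (T^[n] ⁻¹' E ∩ F)) atTop (𝓝 (μ E * μ F)) := by
  obtain ⟨u, P, -, rfl⟩ := (mem_measurableCylinders E).1 hE
  obtain ⟨v, Q, -, rfl⟩ := (mem_measurableCylinders F).1 hF
  obtain ⟨a, b, -, hu⟩ := exists_subset_Icc u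
  obtain ⟨c, d, -, hv⟩ := exists_subset_Icc v
  have hTn (n : ℕ) := (measurePreserving hT hμ hsurj).iterate n
  refine tendsto_const_nhds.congr' ?_
  filter_upwards [eventually_disjoint_Icc hside a b c d] with n hn
  obtain ⟨Q', hQ'⟩ :=
    iterate_preimage_cylinder_Icc hT a b (restrict₂ (π := fun _ => ZMod m) hu ⁻¹' P) n
  rw [← (hTn n).measure_preimage (measurableSet_cylinder u P).nullMeasurableSet,
    cylinder_eq_cylinder_of_subset hu, hQ',
    measure_cylinder_inter_of_disjoint hμ (hn.mono_right hv)]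

end Automaton

end LinearCellularAutomaton

open LinearCellularAutomaton in
theorem stmt12_general (m : ℕ) (hm : 2 ≤ m) (l r : ℤ) (hside : r < 0 ∨ 0 < l)
    (lam : ℤ → ZMod m)
    (T : (ℤ → ZMod m) → ℤ → ZMod m)
    (hT : ∀ x n, T x n = ∑ i ∈ Finset.Icc l r, lam i * x (n + i))
    (hsurj : Function.Surjective T)
    (μ : Measure (ℤ → ZMod m)) [IsProbabilityMeasure μ]
    (hμ : ∀ (a : ℤ) (s : ℕ) (j : ℕ → ZMod m),
      μ {x | ∀ t : ℕ, t ≤ s → x (a + (t : ℤ)) = j t} = ((m : ℝ≥0∞))⁻¹ ^ (s + 1)) :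
    ∀ A B : Set (ℤ → ZMod m), MeasurableSet A → MeasurableSet B →
      Tendsto (fun n : ℕ => μ (T^[n] ⁻¹' A ∩ B)) atTop (𝓝 (μ A * μ B)) := by
  have : NeZero m := ⟨by omega⟩
  intro A B hA hB
  exact tendsto_measure_iterate_preimage_inter_of_measureDense (measurePreserving hT hμ hsurj)
    (.of_generateFrom_isSetAlgebra_finite μ isSetAlgebra_measurableCylinders
      generateFrom_measurableCylinders.symm)
    (fun E hE F hF => tendsto_measure_iterate_preimage_cylinder_inter hT hμ hside hsurj hE hF)
    hA hB

/-- A surjective linear cellular automaton `T_{f[l,r]}` over `ZMod m` with strictly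
one-sided neighborhood (`r < 0` or `l > 0`) is strong mixing with respect to the uniform
Bernoulli measure: `lim_{n→∞} μ(T^{-n}A ∩ B) = μ(A)·μ(B)` for all measurable `A`, `B`. -/
theorem stmt12 (m : ℕ) (hm : 2 ≤ m) (l r : ℤ) (hlr : l ≤ r) (hside : r < 0 ∨ 0 < l)
    (lam : ℤ → ZMod m)
    (T : (ℤ → ZMod m) → ℤ → ZMod m)
    (hT : ∀ x n, T x n = ∑ i ∈ Finset.Icc l r, lam i * x (n + i))
    (hsurj : Function.Surjective T)
    (μ : Measure (ℤ → ZMod m)) [IsProbabilityMeasure μ]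
    (hμ : ∀ (a : ℤ) (s : ℕ) (j : ℕ → ZMod m),
      μ {x | ∀ t : ℕ, t ≤ s → x (a + (t : ℤ)) = j t} = ((m : ℝ≥0∞))⁻¹ ^ (s + 1)) :
    ∀ A B : Set (ℤ → ZMod m), MeasurableSet A → MeasurableSet B →
      Tendsto (fun n : ℕ => μ (T^[n] ⁻¹' A ∩ B)) atTop (𝓝 (μ A * μ B)) :=
  stmt12_general m hm l r hside lam T hT hsurj μ hμ
end
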